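/- arXiv:1205.4748 — 2 statements merged into one kernel-verified Lean document; each statement's English description precedes it below -/
import Mathlib

section
/- For every admissible strategy ϑ ∈ Θ and all integers 0 ≤ k ≤ l ≤ T, the conditional mean–variance criterion satisfies the recursion U_k(ϑ) = E[U_l(ϑ) | F_k] − (γ/2) · Var[ E[Σ_{i=l+1}^T ϑ_i ΔS_i | F_l] + V_l(x,ϑ) | F_k ] P-almost surely. -/
open MeasureTheory Finset

noncomputable section

namespace TCMV

variable {Ω : Type*}

/-- Conditional variance of `X` given the σ-algebra `m`. -/
def condVar [MeasurableSpace Ω] (μ : Measure Ω) (m : MeasurableSpace Ω) (X : Ω → ℝ) : Ω → ℝ :=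
  μ[fun ω => (X ω - (μ[X|m]) ω) ^ 2 | m]

/-- Conditional covariance of `X` and `Y` given the σ-algebra `m`. -/
def condCov [MeasurableSpace Ω] (μ : Measure Ω) (m : MeasurableSpace Ω) (X Y : Ω → ℝ) : Ω → ℝ :=
  fun ω => (μ[fun ω' => X ω' * Y ω'|m]) ω - (μ[X|m]) ω * (μ[Y|m]) ω

variable [m0 : MeasurableSpace Ω]

/-- The increment `ΔS_k = S_k - S_{k-1}`. -/
def dS (S : ℕ → Ω → ℝ) (k : ℕ) : Ω → ℝ := fun ω => S k ω - S (k - 1) ω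

/-- The predictable (drift) part of the Doob decomposition: `ΔA_k = E[ΔS_k | F_{k-1}]`. -/
def dA (μ : Measure Ω) (ℱ : Filtration ℕ m0) (S : ℕ → Ω → ℝ) (k : ℕ) : Ω → ℝ :=
  μ[dS S k | ℱ (k - 1)]

/-- The martingale part of the Doob decomposition: `ΔM_k = ΔS_k - E[ΔS_k | F_{k-1}]`. -/
def dM (μ : Measure Ω) (ℱ : Filtration ℕ m0) (S : ℕ → Ω → ℝ) (k : ℕ) : Ω → ℝ :=
  fun ω => dS S k ω - dA μ ℱ S k ω

/-- The set `Θ` of admissible strategies: predictable with the two square-integrability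
properties. -/
def Admissible (μ : Measure Ω) (ℱ : Filtration ℕ m0) (S : ℕ → Ω → ℝ) (T : ℕ)
    (ϑ : ℕ → Ω → ℝ) : Prop :=
  (∀ k ∈ Finset.Icc 1 T, StronglyMeasurable[ℱ (k - 1)] (ϑ k)) ∧
  Integrable (fun ω => ∑ k ∈ Finset.Icc 1 T,
      (ϑ k ω) ^ 2 * (μ[fun ω' => (dM μ ℱ S k ω') ^ 2 | ℱ (k - 1)]) ω) μ ∧
  Integrable (fun ω => (∑ k ∈ Finset.Icc 1 T, |ϑ k ω * dA μ ℱ S k ω|) ^ 2) μ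

/-- The wealth process `V_k(x, ϑ) = x + ∑_{i=1}^k ϑ_i ΔS_i`. -/
def wealth (S : ℕ → Ω → ℝ) (x : ℝ) (ϑ : ℕ → Ω → ℝ) (k : ℕ) : Ω → ℝ :=
  fun ω => x + ∑ i ∈ Finset.Icc 1 k, ϑ i ω * dS S i ω

/-- The conditional mean–variance criterion
`U_k(ϑ) = E[V_T(x,ϑ)|F_k] - (γ/2) Var[V_T(x,ϑ)|F_k]`. -/
def U (μ : Measure Ω) (ℱ : Filtration ℕ m0) (S : ℕ → Ω → ℝ) (T : ℕ) (x γ : ℝ)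
    (ϑ : ℕ → Ω → ℝ) (k : ℕ) : Ω → ℝ :=
  fun ω => (μ[wealth S x ϑ T | ℱ k]) ω - γ / 2 * condVar μ (ℱ k) (wealth S x ϑ T) ω

/-- The local perturbation `ϑ + δ 1_{{k}}` of `ϑ` by `δ` at time `k`. -/
def perturb (ϑ δ : ℕ → Ω → ℝ) (k : ℕ) : ℕ → Ω → ℝ :=
  fun j => if j = k then (fun ω => ϑ k ω + δ k ω) else ϑ j

/-- A strategy is locally mean–variance efficient if local perturbations never increase the
conditional mean–variance criterion. -/
def IsLMVE (μ : Measure Ω) (ℱ : Filtration ℕ m0) (S : ℕ → Ω → ℝ) (T : ℕ) (x γ : ℝ)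
    (θ : ℕ → Ω → ℝ) : Prop :=
  ∀ k ∈ Finset.Icc 1 T, ∀ δ : ℕ → Ω → ℝ, Admissible μ ℱ S T δ →
    ∀ᵐ ω ∂μ, U μ ℱ S T x γ (perturb θ δ k) (k - 1) ω ≤ U μ ℱ S T x γ θ (k - 1) ω

/-- The structure condition (SC): `ΔA_k = 0` a.s. on `{E[(ΔM_k)^2 | F_{k-1}] = 0}`. -/
def SC (μ : Measure Ω) (ℱ : Filtration ℕ m0) (S : ℕ → Ω → ℝ) (T : ℕ) : Prop :=
  ∀ k ∈ Finset.Icc 1 T, ∀ᵐ ω ∂μ,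
    (μ[fun ω' => (dM μ ℱ S k ω') ^ 2 | ℱ (k - 1)]) ω = 0 → dA μ ℱ S k ω = 0

/-- The process `λ_k = ΔA_k / E[(ΔM_k)^2 | F_{k-1}]` (with the convention `0/0 = 0`). -/
def lam (μ : Measure Ω) (ℱ : Filtration ℕ m0) (S : ℕ → Ω → ℝ) (k : ℕ) : Ω → ℝ :=
  fun ω => dA μ ℱ S k ω / (μ[fun ω' => (dM μ ℱ S k ω') ^ 2 | ℱ (k - 1)]) ω

/-- The mean–variance tradeoff process `K_k = ∑_{i=1}^k λ_i ΔA_i`. -/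
def MVT (μ : Measure Ω) (ℱ : Filtration ℕ m0) (S : ℕ → Ω → ℝ) (k : ℕ) : Ω → ℝ :=
  fun ω => ∑ i ∈ Finset.Icc 1 k, lam μ ℱ S i ω * dA μ ℱ S i ω

/-- The Galtchouk–Kunita–Watanabe integrand of `Y_T(ψ) = ∑_{i=1}^T ψ_i ΔA_i` with respect to the
martingale part `M`: `ξ_k(ψ) = E[Y_T(ψ) ΔM_k | F_{k-1}] / E[(ΔM_k)^2 | F_{k-1}]`
(with the convention `0/0 = 0`). -/
def gkw (μ : Measure Ω) (ℱ : Filtration ℕ m0) (S : ℕ → Ω → ℝ) (T : ℕ)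
    (ψ : ℕ → Ω → ℝ) (k : ℕ) : Ω → ℝ :=
  fun ω =>
    (μ[fun ω' => (∑ i ∈ Finset.Icc 1 T, ψ i ω' * dA μ ℱ S i ω') * dM μ ℱ S k ω' | ℱ (k - 1)]) ω
      / (μ[fun ω' => (dM μ ℱ S k ω') ^ 2 | ℱ (k - 1)]) ω


/-!
Write `X = V_T(x, ϑ)`. By the tower property and the conditional law of total variance
`Var[X | F_k] = E[Var[X | F_l] | F_k] + Var[E[X | F_l] | F_k]`, the criterion
`E[X | F_k] - (γ/2) Var[X | F_k]` splits into `E[U_l | F_k]` and the variance of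
`E[X | F_l] = E[∑_{i>l} ϑ_i ΔS_i | F_l] + V_l`. All of this needs `X ∈ L²`, and the only
nontrivial part is `ϑ_i ΔM_i ∈ L²`: since `ϑ_i` is `F_{i-1}`-measurable,
`E[(ϑ_i ΔM_i)²] = E[ϑ_i² E[(ΔM_i)² | F_{i-1}]]`, which admissibility makes finite.
-/

open scoped ENNReal ProbabilityTheory

section ConditionalExpectation

variable {Ω : Type*} {m m₀ : MeasurableSpace Ω} {μ : Measure Ω}

theorem lintegral_mul_condLExp (hm : m ≤ m₀) [SigmaFinite (μ.trim hm)] {g F : Ω → ℝ≥0∞}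
    (hg : Measurable[m] g) (hF : AEMeasurable F μ) :
    ∫⁻ ω, g ω * μ⁻[F|m] ω ∂μ = ∫⁻ ω, g ω * F ω ∂μ := by
  have htrim : (μ.withDensity μ⁻[F|m]).trim hm = (μ.withDensity F).trim hm := by
    refine @Measure.ext _ m _ _ fun s hs => ?_
    rw [trim_measurableSet_eq hm hs, trim_measurableSet_eq hm hs, withDensity_apply _ (hm s hs),
      withDensity_apply _ (hm s hs), setLIntegral_condLExp hm μ F hs]
  have hg₀ : Measurable g := hg.mono hm le_rfl
  calc ∫⁻ ω, g ω * μ⁻[F|m] ω ∂μ = ∫⁻ ω, g ω ∂(μ.withDensity μ⁻[F|m]).trim hm := by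
        rw [lintegral_trim hm hg, lintegral_withDensity_eq_lintegral_mul _
          (measurable_condLExp' m μ F) hg₀]
        simp only [Pi.mul_apply, mul_comm]
    _ = ∫⁻ ω, g ω * F ω ∂μ := by
        rw [htrim, lintegral_trim hm hg,
          lintegral_withDensity_eq_lintegral_mul₀ hF hg₀.aemeasurable]
        simp only [Pi.mul_apply, mul_comm]

theorem memLp_two_mul_of_integrable_sq_mul_condExp_sq (hm : m ≤ m₀) [SigmaFinite (μ.trim hm)]
    {g f : Ω → ℝ} (hg : StronglyMeasurable[m] g) (hf : MemLp f 2 μ)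
    (hgf : Integrable (fun ω => g ω ^ 2 * μ[fun ω' => f ω' ^ 2|m] ω) μ) :
    MemLp (fun ω => g ω * f ω) 2 μ := by
  have hmeas : AEStronglyMeasurable (fun ω => g ω * f ω) μ :=
    (hg.mono hm).aestronglyMeasurable.mul hf.aestronglyMeasurable
  refine (memLp_two_iff_integrable_sq hmeas).2 ⟨hmeas.pow 2, ?_⟩
  rw [hasFiniteIntegral_iff_ofReal (ae_of_all _ fun ω => sq_nonneg _)]
  have hF := condLExp_ofReal m hf.integrable_sq (ae_of_all _ fun ω => sq_nonneg (f ω))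
  calc ∫⁻ ω, ENNReal.ofReal ((g ω * f ω) ^ 2) ∂μ
      = ∫⁻ ω, ENNReal.ofReal (g ω ^ 2) * ENNReal.ofReal (f ω ^ 2) ∂μ := by
        simp_rw [mul_pow, ENNReal.ofReal_mul (sq_nonneg _)]
    _ = ∫⁻ ω, ENNReal.ofReal (g ω ^ 2) * μ⁻[fun ω' => ENNReal.ofReal (f ω' ^ 2)|m] ω ∂μ :=
        (lintegral_mul_condLExp hm (hg.measurable.pow_const 2).ennreal_ofReal
          hf.integrable_sq.1.aemeasurable.ennreal_ofReal).symm
    _ = ∫⁻ ω, ENNReal.ofReal (g ω ^ 2 * μ[fun ω' => f ω' ^ 2|m] ω) ∂μ := by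
        refine lintegral_congr_ae ?_
        filter_upwards [hF] with ω hω
        rw [hω, ENNReal.ofReal_mul (sq_nonneg _)]
    _ < ∞ := hgf.lintegral_lt_top

theorem condVar_ae_eq_condExp_condVar_add_condVar_condExp [IsFiniteMeasure μ]
    {m₁ m₂ : MeasurableSpace Ω} (h₁₂ : m₁ ≤ m₂) (h₂ : m₂ ≤ m₀) {X : Ω → ℝ} (hX : MemLp X 2 μ) :
    Var[X; μ | m₁] =ᵐ[μ] μ[Var[X; μ | m₂]|m₁] + Var[μ[X|m₂]; μ | m₁] := by
  have hY : MemLp (μ[X|m₂]) 2 μ := hX.condExp one_le_two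
  filter_upwards [ProbabilityTheory.condVar_ae_eq_condExp_sq_sub_sq_condExp (h₁₂.trans h₂) hX,
    ProbabilityTheory.condVar_ae_eq_condExp_sq_sub_sq_condExp (h₁₂.trans h₂) hY,
    condExp_congr_ae (m := m₁) (ProbabilityTheory.condVar_ae_eq_condExp_sq_sub_sq_condExp h₂ hX),
    condExp_sub (m := m₁) (f := μ[X ^ 2|m₂]) (g := μ[X|m₂] ^ 2) integrable_condExp
      hY.integrable_sq,
    condExp_condExp_of_le (μ := μ) (f := X ^ 2) h₁₂ h₂,
    condExp_condExp_of_le (μ := μ) (f := X) h₁₂ h₂] with ω h₁ h₂ h₃ h₄ h₅ h₆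
  simp only [Pi.add_apply, Pi.sub_apply] at *
  rw [h₁, h₂, h₃, h₄, h₅, Pi.pow_apply, Pi.pow_apply, h₆]
  ring

theorem condExp_sub_smul_condVar_ae_eq [IsFiniteMeasure μ] {m₁ m₂ : MeasurableSpace Ω}
    (h₁₂ : m₁ ≤ m₂) (h₂ : m₂ ≤ m₀) {X : Ω → ℝ} (hX : MemLp X 2 μ) (c : ℝ) :
    μ[X|m₁] - c • Var[X; μ | m₁] =ᵐ[μ]
      μ[μ[X|m₂] - c • Var[X; μ | m₂]|m₁] - c • Var[μ[X|m₂]; μ | m₁] := by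
  filter_upwards [condVar_ae_eq_condExp_condVar_add_condVar_condExp h₁₂ h₂ hX,
    condExp_sub (m := m₁) integrable_condExp (ProbabilityTheory.integrable_condVar.smul c),
    condExp_smul (m := m₁) (μ := μ) c (Var[X; μ | m₂]),
    condExp_condExp_of_le (μ := μ) (f := X) h₁₂ h₂] with ω h₁ h₂ h₃ h₄
  simp only [Pi.add_apply, Pi.sub_apply, Pi.smul_apply, smul_eq_mul] at *
  rw [h₁, h₂, h₃, h₄]
  ring

end ConditionalExpectation

theorem wealth_eq_add_sum {Ω : Type*} (S : ℕ → Ω → ℝ) (x : ℝ) (ϑ : ℕ → Ω → ℝ) {l T : ℕ}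
    (hlT : l ≤ T) :
    wealth S x ϑ T = wealth S x ϑ l + fun ω => ∑ i ∈ Icc (l + 1) T, ϑ i ω * dS S i ω := by
  funext ω
  simp only [wealth, Pi.add_apply, add_assoc, add_right_inj]
  simpa only [← Icc_add_one_left_eq_Ioc, zero_add] using
    (sum_Ioc_consecutive (fun i => ϑ i ω * dS S i ω) (Nat.zero_le l) hlT).symm

section Strategy

variable {μ : Measure Ω} {ℱ : Filtration ℕ m0} {S : ℕ → Ω → ℝ} {T : ℕ} {ϑ : ℕ → Ω → ℝ}

theorem memLp_dS (hS : ∀ k, MemLp (S k) 2 μ) (i : ℕ) : MemLp (dS S i) 2 μ :=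
  (hS i).sub (hS (i - 1))

theorem memLp_dA (hS : ∀ k, MemLp (S k) 2 μ) (i : ℕ) : MemLp (dA μ ℱ S i) 2 μ :=
  (memLp_dS hS i).condExp one_le_two

theorem memLp_dM (hS : ∀ k, MemLp (S k) 2 μ) (i : ℕ) : MemLp (dM μ ℱ S i) 2 μ :=
  (memLp_dS hS i).sub (memLp_dA hS i)

theorem aestronglyMeasurable_mul_dA (hϑ : Admissible μ ℱ S T ϑ) {i : ℕ} (hi : i ∈ Icc 1 T) :
    AEStronglyMeasurable (fun ω => ϑ i ω * dA μ ℱ S i ω) μ :=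
  (((hϑ.1 i hi).mul stronglyMeasurable_condExp).mono (ℱ.le _)).aestronglyMeasurable

theorem memLp_mul_dA (hϑ : Admissible μ ℱ S T ϑ) {i : ℕ} (hi : i ∈ Icc 1 T) :
    MemLp (fun ω => ϑ i ω * dA μ ℱ S i ω) 2 μ := by
  have hsum : AEStronglyMeasurable (fun ω => ∑ k ∈ Icc 1 T, |ϑ k ω * dA μ ℱ S k ω|) μ :=
    Finset.aestronglyMeasurable_fun_sum _ fun k hk => continuous_abs.comp_aestronglyMeasurable
      (aestronglyMeasurable_mul_dA hϑ hk)
  refine ((memLp_two_iff_integrable_sq hsum).2 hϑ.2.2).of_le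
    (aestronglyMeasurable_mul_dA hϑ hi) (ae_of_all _ fun ω => ?_)
  rw [Real.norm_eq_abs, Real.norm_of_nonneg (sum_nonneg fun k _ => abs_nonneg _)]
  exact single_le_sum (f := fun k => |ϑ k ω * dA μ ℱ S k ω|) (fun k _ => abs_nonneg _) hi

theorem memLp_mul_dM [IsFiniteMeasure μ] (hS : ∀ k, MemLp (S k) 2 μ)
    (hϑ : Admissible μ ℱ S T ϑ) {i : ℕ} (hi : i ∈ Icc 1 T) :
    MemLp (fun ω => ϑ i ω * dM μ ℱ S i ω) 2 μ := by
  refine memLp_two_mul_of_integrable_sq_mul_condExp_sq (ℱ.le _) (hϑ.1 i hi) (memLp_dM hS i)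
    (hϑ.2.1.mono' ((((hϑ.1 i hi).pow 2).mul stronglyMeasurable_condExp).mono
      (ℱ.le _)).aestronglyMeasurable ?_)
  have hvar : ∀ᵐ ω ∂μ, ∀ k, 0 ≤ μ[fun ω' => dM μ ℱ S k ω' ^ 2|ℱ (k - 1)] ω :=
    ae_all_iff.2 fun k => condExp_nonneg (ae_of_all _ fun ω => sq_nonneg _)
  filter_upwards [hvar] with ω hω
  rw [Real.norm_of_nonneg (mul_nonneg (sq_nonneg _) (hω i))]
  exact single_le_sum (f := fun k => ϑ k ω ^ 2 * μ[fun ω' => dM μ ℱ S k ω' ^ 2|ℱ (k - 1)] ω)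
    (fun k _ => mul_nonneg (sq_nonneg _) (hω k)) hi

theorem memLp_mul_dS [IsFiniteMeasure μ] (hS : ∀ k, MemLp (S k) 2 μ)
    (hϑ : Admissible μ ℱ S T ϑ) {i : ℕ} (hi : i ∈ Icc 1 T) :
    MemLp (fun ω => ϑ i ω * dS S i ω) 2 μ := by
  have hsplit : (fun ω => ϑ i ω * dS S i ω)
      = fun ω => ϑ i ω * dM μ ℱ S i ω + ϑ i ω * dA μ ℱ S i ω := by
    funext ω
    simp only [dM]
    ring
  rw [hsplit]
  exact (memLp_mul_dM hS hϑ hi).add (memLp_mul_dA hϑ hi)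

theorem memLp_sum_mul_dS [IsFiniteMeasure μ] (hS : ∀ k, MemLp (S k) 2 μ)
    (hϑ : Admissible μ ℱ S T ϑ) {s : Finset ℕ} (hs : s ⊆ Icc 1 T) :
    MemLp (fun ω => ∑ i ∈ s, ϑ i ω * dS S i ω) 2 μ :=
  memLp_finsetSum s fun _ hi => memLp_mul_dS hS hϑ (hs hi)

theorem memLp_wealth [IsFiniteMeasure μ] (hS : ∀ k, MemLp (S k) 2 μ)
    (hϑ : Admissible μ ℱ S T ϑ) (x : ℝ) {l : ℕ} (hlT : l ≤ T) :
    MemLp (wealth S x ϑ l) 2 μ :=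
  (memLp_const x).add (memLp_sum_mul_dS hS hϑ (Icc_subset_Icc_right hlT))

theorem stronglyMeasurable_wealth (hS : StronglyAdapted ℱ S) (x : ℝ) {l : ℕ}
    (hϑ : ∀ i ∈ Icc 1 l, StronglyMeasurable[ℱ (i - 1)] (ϑ i)) :
    StronglyMeasurable[ℱ l] (wealth S x ϑ l) := by
  refine stronglyMeasurable_const.add (Finset.stronglyMeasurable_fun_sum _ fun i hi => ?_)
  have hil : i - 1 ≤ l := (Nat.sub_le i 1).trans (mem_Icc.1 hi).2
  exact ((hϑ i hi).mono (ℱ.mono hil)).mul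
    (((hS i).mono (ℱ.mono (mem_Icc.1 hi).2)).sub ((hS (i - 1)).mono (ℱ.mono hil)))

theorem condExp_wealth_ae_eq [IsFiniteMeasure μ] (hS : StronglyAdapted ℱ S)
    (hL2 : ∀ k, MemLp (S k) 2 μ) (hϑ : Admissible μ ℱ S T ϑ) (x : ℝ) {l : ℕ} (hlT : l ≤ T) :
    μ[wealth S x ϑ T|ℱ l] =ᵐ[μ]
      fun ω => μ[fun ω' => ∑ i ∈ Icc (l + 1) T, ϑ i ω' * dS S i ω'|ℱ l] ω + wealth S x ϑ l ω := by
  have htail := memLp_sum_mul_dS hL2 hϑ (s := Icc (l + 1) T) (Icc_subset_Icc_left (by omega))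
  have hWl := memLp_wealth hL2 hϑ x hlT
  rw [wealth_eq_add_sum S x ϑ hlT, add_comm]
  filter_upwards [condExp_add (m := ℱ l) (htail.integrable one_le_two)
    (hWl.integrable one_le_two)] with ω hω
  rw [hω, Pi.add_apply, condExp_of_stronglyMeasurable (ℱ.le l)
    (stronglyMeasurable_wealth hS x fun i hi => hϑ.1 i (Icc_subset_Icc_right hlT hi))
    (hWl.integrable one_le_two)]

end Strategy

theorem recursion_of_criterion_general
    {Ω : Type*} [m0 : MeasurableSpace Ω] (μ : Measure Ω) [IsProbabilityMeasure μ]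
    (T : ℕ) (ℱ : Filtration ℕ m0)
    (S : ℕ → Ω → ℝ) (hAdapted : StronglyAdapted ℱ S) (hL2 : ∀ k, MemLp (S k) 2 μ)
    (x γ : ℝ)
    (ϑ : ℕ → Ω → ℝ) (hϑ : Admissible μ ℱ S T ϑ)
    (k l : ℕ) (hkl : k ≤ l) (hlT : l ≤ T) :
    ∀ᵐ ω ∂μ, U μ ℱ S T x γ ϑ k ω =
      (μ[U μ ℱ S T x γ ϑ l | ℱ k]) ω -
        γ / 2 * condVar μ (ℱ k)
          (fun ω' =>
            (μ[fun ω'' => ∑ i ∈ Finset.Icc (l + 1) T, ϑ i ω'' * dS S i ω'' | ℱ l]) ω'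
              + wealth S x ϑ l ω') ω := by
  have hX : MemLp (wealth S x ϑ T) 2 μ := memLp_wealth hL2 hϑ x le_rfl
  filter_upwards [condExp_sub_smul_condVar_ae_eq (ℱ.mono hkl) (ℱ.le l) hX (γ / 2),
    ProbabilityTheory.condVar_congr_ae (m := ℱ k)
      (condExp_wealth_ae_eq hAdapted hL2 hϑ x hlT)] with ω hrec hvar
  -- `U` and `TCMV.condVar` unfold definitionally to the expressions in `hrec`.
  exact hrec.trans (congrArg (_ - γ / 2 * ·) hvar)

/-- the recursion (total variance formula) for the conditional mean–variance
criterion: for `0 ≤ k ≤ l ≤ T`,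
`U_k(ϑ) = E[U_l(ϑ) | F_k] - (γ/2) Var[E[∑_{i=l+1}^T ϑ_i ΔS_i | F_l] + V_l(x,ϑ) | F_k]` a.s. -/
theorem recursion_of_criterion
    {Ω : Type*} [m0 : MeasurableSpace Ω] (μ : Measure Ω) [IsProbabilityMeasure μ]
    (T : ℕ) (hT : 1 ≤ T) (ℱ : Filtration ℕ m0)
    (S : ℕ → Ω → ℝ) (hAdapted : StronglyAdapted ℱ S) (hL2 : ∀ k, MemLp (S k) 2 μ)
    (x γ : ℝ) (hγ : 0 < γ)
    (ϑ : ℕ → Ω → ℝ) (hϑ : Admissible μ ℱ S T ϑ)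
    (k l : ℕ) (hkl : k ≤ l) (hlT : l ≤ T) :
    ∀ᵐ ω ∂μ, U μ ℱ S T x γ ϑ k ω =
      (μ[U μ ℱ S T x γ ϑ l | ℱ k]) ω -
        γ / 2 * condVar μ (ℱ k)
          (fun ω' =>
            (μ[fun ω'' => ∑ i ∈ Finset.Icc (l + 1) T, ϑ i ω'' * dS S i ω'' | ℱ l]) ω'
              + wealth S x ϑ l ω') ω :=
  recursion_of_criterion_general (m0 := m0) μ T ℱ S hAdapted hL2 x γ ϑ hϑ k l hkl hlT

end TCMV
end
end

section
/- Suppose S satisfies the structure condition (SC), K_T ∈ L²(P), and K_T admits a decomposition K_T = K̂_0 + Σ_{i=1}^T ξ̂_i ΔS_i + L̂_T with K̂_0 F_0-measurable and square-integrable, ξ̂ predictable with E[Σ_{k=1}^T ξ̂_k² E[(ΔM_k)² | F_{k−1}]] < ∞ and E[(Σ_{k=1}^T |(ξ̂_k − λ_k) ΔA_k|)²] < ∞, and L̂ a square-integrable martingale with L̂_0 = 0 strongly orthogonal to M. Then the integrand ξ̂ is itself an admissible strategy, i.e. in addition E[(Σ_{k=1}^T |ξ̂_k ΔA_k|)²]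 < ∞, so that ξ̂ ∈ Θ and the decomposition is a Föllmer–Schweizer decomposition of K_T. -/
open MeasureTheory Finset

noncomputable section

namespace TCMV

variable {Ω : Type*}

variable [m0 : MeasurableSpace Ω]

/-- The conditions on a decomposition `K_T = K̂_0 + ∑_{i=1}^T ξ̂_i ΔS_i + L̂_T` of the terminal
value of the mean–variance tradeoff process: `K̂_0` is `F_0`-measurable and square-integrable,
`ξ̂` is predictable with `E[∑ ξ̂_k² E[(ΔM_k)²|F_{k-1}]] < ∞` and
`E[(∑ |(ξ̂_k - λ_k) ΔA_k|)²] < ∞`, and `L̂` is a square-integrable martingale null at zero that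
is strongly orthogonal to `M`. -/
def DecompOK (μ : Measure Ω) (ℱ : Filtration ℕ m0) (S : ℕ → Ω → ℝ) (T : ℕ)
    (K0 : Ω → ℝ) (ξ : ℕ → Ω → ℝ) (L : ℕ → Ω → ℝ) : Prop :=
  StronglyMeasurable[ℱ 0] K0 ∧ MemLp K0 2 μ ∧
  (∀ k ∈ Finset.Icc 1 T, StronglyMeasurable[ℱ (k - 1)] (ξ k)) ∧
  Integrable (fun ω => ∑ k ∈ Finset.Icc 1 T,
      (ξ k ω) ^ 2 * (μ[fun ω' => (dM μ ℱ S k ω') ^ 2 | ℱ (k - 1)]) ω) μ ∧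
  Integrable (fun ω =>
      (∑ k ∈ Finset.Icc 1 T, |(ξ k ω - lam μ ℱ S k ω) * dA μ ℱ S k ω|) ^ 2) μ ∧
  Martingale L ℱ μ ∧ (∀ k, MemLp (L k) 2 μ) ∧ (∀ ω, L 0 ω = 0) ∧
  (∀ k ∈ Finset.Icc 1 T, ∀ᵐ ω ∂μ,
    (μ[fun ω' => (L k ω' - L (k - 1) ω') * dM μ ℱ S k ω' | ℱ (k - 1)]) ω = 0) ∧
  (∀ᵐ ω ∂μ, MVT μ ℱ S T ω = K0 ω + ∑ i ∈ Finset.Icc 1 T, ξ i ω * dS S i ω + L T ω)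

/-!
Write `ξ̂_k ΔA_k = (ξ̂_k - λ_k) ΔA_k + λ_k ΔA_k`. Since `λ_k ΔA_k = ΔA_k² / E[(ΔM_k)² | F_{k-1}] ≥ 0`,
summing absolute values gives `∑ |ξ̂_k ΔA_k| ≤ ∑ |(ξ̂_k - λ_k) ΔA_k| + K_T`, and both terms on the
right are square-integrable by hypothesis.
-/

theorem integrable_sq_of_abs_le_add {α : Type*} [MeasurableSpace α] {μ : Measure α}
    {f g h : α → ℝ} (hf : AEStronglyMeasurable f μ) (hg : Integrable (fun x => g x ^ 2) μ)
    (hh : Integrable (fun x => h x ^ 2) μ) (hfgh : ∀ᵐ x ∂μ, |f x| ≤ g x + h x) :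
    Integrable (fun x => f x ^ 2) μ := by
  refine ((hg.add hh).const_mul 2).mono' (hf.pow 2) ?_
  filter_upwards [hfgh] with x hx
  calc ‖f x ^ 2‖ = |f x| ^ 2 := by rw [Real.norm_eq_abs, abs_pow]
    _ ≤ (g x + h x) ^ 2 := pow_le_pow_left₀ (abs_nonneg _) hx 2
    _ ≤ 2 * (g x ^ 2 + h x ^ 2) := add_sq_le

section

variable {μ : Measure Ω} {ℱ : Filtration ℕ m0} {S : ℕ → Ω → ℝ}

theorem lam_mul_dA_nonneg_ae (k : ℕ) : ∀ᵐ ω ∂μ, 0 ≤ lam μ ℱ S k ω * dA μ ℱ S k ω := by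
  filter_upwards [condExp_nonneg (m := ℱ (k - 1)) (μ := μ)
    (ae_of_all _ fun ω => sq_nonneg (dM μ ℱ S k ω))] with ω hω
  rw [lam, div_mul_eq_mul_div, ← sq]
  exact div_nonneg (sq_nonneg _) hω

theorem sum_abs_mul_dA_le_ae (T : ℕ) (ξ : ℕ → Ω → ℝ) :
    ∀ᵐ ω ∂μ, ∑ k ∈ Icc 1 T, |ξ k ω * dA μ ℱ S k ω| ≤
      ∑ k ∈ Icc 1 T, |(ξ k ω - lam μ ℱ S k ω) * dA μ ℱ S k ω| + MVT μ ℱ S T ω := by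
  filter_upwards [ae_all_iff.2 (lam_mul_dA_nonneg_ae (μ := μ) (ℱ := ℱ) (S := S))] with ω hω
  rw [MVT, ← sum_add_distrib]
  refine sum_le_sum fun k _ => ?_
  calc |ξ k ω * dA μ ℱ S k ω|
      = |(ξ k ω - lam μ ℱ S k ω) * dA μ ℱ S k ω + lam μ ℱ S k ω * dA μ ℱ S k ω| := by ring_nf
    _ ≤ |(ξ k ω - lam μ ℱ S k ω) * dA μ ℱ S k ω| + |lam μ ℱ S k ω * dA μ ℱ S k ω| :=
      abs_add_le _ _
    _ = _ := by rw [abs_of_nonneg (hω k)]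

theorem stronglyMeasurable_sum_abs_mul_dA {T : ℕ} {ξ : ℕ → Ω → ℝ}
    (hξ : ∀ k ∈ Icc 1 T, StronglyMeasurable[ℱ (k - 1)] (ξ k)) :
    StronglyMeasurable fun ω => ∑ k ∈ Icc 1 T, |ξ k ω * dA μ ℱ S k ω| :=
  Finset.stronglyMeasurable_fun_sum _ fun k hk =>
    (((hξ k hk).mono (ℱ.le _)).mul (stronglyMeasurable_condExp.mono (ℱ.le _))).norm

end

theorem integrand_of_decomposition_admissible_general
    {Ω : Type*} [m0 : MeasurableSpace Ω] (μ : Measure Ω)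
    (T : ℕ) (ℱ : Filtration ℕ m0)
    (S : ℕ → Ω → ℝ)
    (hK2 : MemLp (MVT μ ℱ S T) 2 μ)
    (K0 : Ω → ℝ) (ξ : ℕ → Ω → ℝ) (L : ℕ → Ω → ℝ)
    (hDec : DecompOK μ ℱ S T K0 ξ L) :
    Integrable (fun ω => (∑ k ∈ Finset.Icc 1 T, |ξ k ω * dA μ ℱ S k ω|) ^ 2) μ ∧
    Admissible μ ℱ S T ξ := by
  obtain ⟨-, -, hξpred, hξint, hξlamint, -⟩ := hDec
  have hmain : Integrable (fun ω => (∑ k ∈ Icc 1 T, |ξ k ω * dA μ ℱ S k ω|) ^ 2) μ := by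
    refine integrable_sq_of_abs_le_add
      (stronglyMeasurable_sum_abs_mul_dA hξpred).aestronglyMeasurable hξlamint hK2.integrable_sq ?_
    filter_upwards [sum_abs_mul_dA_le_ae T ξ] with ω hω
    rwa [abs_of_nonneg (sum_nonneg fun k _ => abs_nonneg _)]
  exact ⟨hmain, hξpred, hξint, hmain⟩

/-- if `S` satisfies (SC), `K_T ∈ L²(P)` and `K_T` admits a decomposition as above,
then the integrand `ξ̂` is itself an admissible strategy, i.e. in addition
`E[(∑ |ξ̂_k ΔA_k|)²] < ∞`, so that `ξ̂ ∈ Θ` and the decomposition is a Föllmer–Schweizer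
decomposition of `K_T`. -/
theorem integrand_of_decomposition_admissible
    {Ω : Type*} [m0 : MeasurableSpace Ω] (μ : Measure Ω) [IsProbabilityMeasure μ]
    (T : ℕ) (hT : 1 ≤ T) (ℱ : Filtration ℕ m0)
    (S : ℕ → Ω → ℝ) (hAdapted : StronglyAdapted ℱ S) (hL2 : ∀ k, MemLp (S k) 2 μ)
    (hSC : SC μ ℱ S T) (hK2 : MemLp (MVT μ ℱ S T) 2 μ)
    (K0 : Ω → ℝ) (ξ : ℕ → Ω → ℝ) (L : ℕ → Ω → ℝ)
    (hDec : DecompOK μ ℱ S T K0 ξ L) :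
    Integrable (fun ω => (∑ k ∈ Finset.Icc 1 T, |ξ k ω * dA μ ℱ S k ω|) ^ 2) μ ∧
    Admissible μ ℱ S T ξ :=
  integrand_of_decomposition_admissible_general (m0 := m0) μ T ℱ S hK2 K0 ξ L hDec

end TCMV
end
end
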